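/- Lemma B.7: Let D be a triangulated category equipped with a slicing P. Suppose a nonzero object E of D is semistable, i.e. E ∈ P(φ1) for some real number φ1 (equivalently, E admits the length-one HN filtration 0 = E0 → E1 = E with single factor A1 ≅ E in P(φ1)). Suppose E also admits an HN filtration with objects 0 = E'0, E'1, …, E'm = E, semistable factors A'k ∈ P(φ'k) (k = 1, …, m) and phases φ'1 > … > φ'm. Then m = 1 and A'1 is isomorphic to E (so the two filtrations coincide up to isomorphism). -/

import Mathlib

/-!
Comparing phases with `E ∈ P(φ)` from both ends of the filtration: the last map `E → A'ₘ` is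
nonzero, because `A'ₘ` receives no nonzero maps from `E'ₘ₋₁⟦1⟧`, which is built from objects of
phase `> φ'ₘ + 1`; so `φ ≤ φ'ₘ`. Dually, `E'₁ ≅ A'₁` maps nontrivially to every `E'ⱼ`, since
`Hom(E'₁, A'ⱼ⟦-1⟧) = 0` for phase reasons; so `φ'₁ ≤ φ`. As the phases strictly decrease, `m = 1`.
-/

open CategoryTheory Category Limits Pretriangulated

universe v u

variable {D : Type u} [Category.{v} D] [Preadditive D] [HasZeroObject D]
  [HasShift D ℤ] [∀ n : ℤ, (shiftFunctor D n).Additive] [Pretriangulated D]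

structure HNFiltration (P : ℝ → Set D) (E : D) where
  n : ℕ
  one_le_n : 1 ≤ n
  filtObj : ℕ → D
  factor : ℕ → D
  phase : ℕ → ℝ
  isZero_filtObj_zero : IsZero (filtObj 0)
  filtObj_n : filtObj n = E
  phase_strictAnti : ∀ j, 1 ≤ j → j < n → phase (j + 1) < phase j
  factor_nonzero : ∀ j, 1 ≤ j → j ≤ n → ¬ IsZero (factor j)
  factor_mem : ∀ j, 1 ≤ j → j ≤ n → factor j ∈ P (phase j)
  triangle : ∀ j, 1 ≤ j → j ≤ n →
    ∃ (f : filtObj (j - 1) ⟶ filtObj j) (g : filtObj j ⟶ factor j)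
      (h : factor j ⟶ (filtObj (j - 1))⟦(1 : ℤ)⟧),
        Triangle.mk f g h ∈ distTriang D

structure Slicing (D : Type u) [Category.{v} D] [Preadditive D] [HasZeroObject D]
    [HasShift D ℤ] [∀ n : ℤ, (shiftFunctor D n).Additive] [Pretriangulated D] where
  P : ℝ → Set D
  mem_of_iso : ∀ (φ : ℝ) (X Y : D), (X ≅ Y) → X ∈ P φ → Y ∈ P φ
  zero_mem : ∀ (φ : ℝ) (X : D), IsZero X → X ∈ P φ
  sum_mem : ∀ (φ : ℝ) (X Y : D) (b : BinaryBicone X Y), b.IsBilimit →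
    X ∈ P φ → Y ∈ P φ → b.pt ∈ P φ
  shift_mem : ∀ (φ : ℝ) (X : D), X ∈ P (φ + 1) ↔ ∃ Y ∈ P φ, Nonempty (X ≅ Y⟦(1 : ℤ)⟧)
  hom_zero : ∀ (φ₁ φ₂ : ℝ), φ₂ < φ₁ → ∀ (A₁ A₂ : D), A₁ ∈ P φ₁ → A₂ ∈ P φ₂ →
    ∀ f : A₁ ⟶ A₂, f = 0
  hn_exists : ∀ E : D, ¬ IsZero E → Nonempty (HNFiltration P E)

theorem Slicing.shift_neg_one_mem (S : Slicing D) {φ : ℝ} {X : D} (hX : X ∈ S.P φ) :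
    X⟦(-1 : ℤ)⟧ ∈ S.P (φ - 1) := by
  obtain ⟨Y, hY, ⟨e⟩⟩ := (S.shift_mem (φ - 1) X).1 (by rwa [sub_add_cancel])
  exact S.mem_of_iso _ _ _ ((shiftFunctor D (-1 : ℤ)).mapIso e ≪≫ shiftShiftNeg Y 1).symm hY

namespace HNFiltration

section

variable {P : ℝ → Set D} {E : D} (F : HNFiltration P E)

theorem phase_lt_phase {i j : ℕ} (hi : 1 ≤ i) (hij : i < j) (hj : j ≤ F.n) :
    F.phase j < F.phase i := by
  induction j, hij using Nat.le_induction with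
  | base => exact F.phase_strictAnti i hi hj
  | succ k hik ih => exact (F.phase_strictAnti k (by omega) hj).trans (ih (by omega))

theorem nonempty_filtObj_one_iso_factor_one : Nonempty (F.filtObj 1 ≅ F.factor 1) := by
  obtain ⟨f, g, h, hT⟩ := F.triangle 1 le_rfl F.one_le_n
  have : IsIso g := (Triangle.isZero₁_iff_isIso₂ _ hT).1 F.isZero_filtObj_zero
  exact ⟨asIso g⟩

end

variable (S : Slicing D) {E : D} (F : HNFiltration S.P E)

theorem filtObj_one_mem : F.filtObj 1 ∈ S.P (F.phase 1) :=
  have ⟨e⟩ := F.nonempty_filtObj_one_iso_factor_one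
  S.mem_of_iso _ _ _ e.symm (F.factor_mem 1 le_rfl F.one_le_n)

theorem hom_filtObj_eq_zero {Y : D} {ψ : ℝ} (hY : Y ∈ S.P ψ) {j : ℕ} (hj : j ≤ F.n)
    (hψ : ∀ i, 1 ≤ i → i ≤ j → ψ < F.phase i) (r : F.filtObj j ⟶ Y) : r = 0 := by
  induction j with
  | zero => exact F.isZero_filtObj_zero.eq_of_src r 0
  | succ j ih =>
    obtain ⟨f, g, h, hT⟩ := F.triangle (j + 1) (by omega) hj
    obtain ⟨s, rfl⟩ := Triangle.yoneda_exact₂ _ hT r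
      (ih (by omega) (fun i hi hij => hψ i hi (by omega)) _)
    have hs : s = 0 := S.hom_zero (F.phase (j + 1)) ψ (hψ _ (by omega) le_rfl) _ _
      (F.factor_mem _ (by omega) hj) hY s
    rw [hs]
    exact comp_zero

theorem le_phase_last_of_mem {φ : ℝ} (hE : E ∈ S.P φ) : φ ≤ F.phase F.n := by
  by_contra! hlt
  have hn := F.one_le_n
  obtain ⟨f, g, h, hT⟩ := F.triangle F.n hn le_rfl
  have hg : g = 0 := S.hom_zero φ _ hlt _ _ (by rwa [F.filtObj_n]) (F.factor_mem _ hn le_rfl) g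
  obtain ⟨r, hr⟩ := Triangle.yoneda_exact₃ _ hT (𝟙 (F.factor F.n))
    (by change g ≫ 𝟙 _ = 0; rw [hg, zero_comp])
  -- `r : E'ₙ₋₁⟦1⟧ ⟶ A'ₙ` vanishes because its adjoint `E'ₙ₋₁ ⟶ A'ₙ⟦-1⟧` does.
  have hr0 : r = 0 := by
    let adj := (shiftEquiv D (1 : ℤ)).toAdjunction
    have hadj : adj.homEquiv _ _ r = 0 :=
      F.hom_filtObj_eq_zero S (S.shift_neg_one_mem (F.factor_mem _ hn le_rfl)) (by omega)
        (fun i hi hin => by linarith [F.phase_lt_phase hi (by omega : i < F.n) le_rfl]) _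
    rw [← (adj.homEquiv _ _).symm_apply_apply r, hadj, adj.homEquiv_counit, Functor.map_zero]
    exact zero_comp
  exact F.factor_nonzero _ hn le_rfl ((IsZero.iff_id_eq_zero _).2 (by rw [hr, hr0]; exact comp_zero))

theorem exists_hom_filtObj_one_ne_zero {j : ℕ} (hj : 1 ≤ j) (hjn : j ≤ F.n) :
    ∃ u : F.filtObj 1 ⟶ F.filtObj j, u ≠ 0 := by
  induction j, hj using Nat.le_induction with
  | base =>
    obtain ⟨e⟩ := F.nonempty_filtObj_one_iso_factor_one
    refine ⟨𝟙 _, fun h0 => F.factor_nonzero 1 le_rfl F.one_le_n ?_⟩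
    exact ((IsZero.iff_id_eq_zero _).2 h0).of_iso e.symm
  | succ j hj ih =>
    obtain ⟨u, hu⟩ := ih (by omega)
    obtain ⟨f, g, h, hT⟩ := F.triangle (j + 1) (by omega) hjn
    refine ⟨u ≫ f, fun h0 => hu ?_⟩
    -- `u` would factor through `A'ⱼ₊₁⟦-1⟧`, of phase `φ'ⱼ₊₁ - 1 < φ'₁`.
    obtain ⟨w, rfl⟩ := Triangle.coyoneda_exact₂ _ (inv_rot_of_distTriang _ hT) u h0
    have hw : w = 0 := S.hom_zero _ _
      (by linarith [F.phase_lt_phase le_rfl (by omega : 1 < j + 1) hjn]) _ _ (F.filtObj_one_mem S)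
      (S.shift_neg_one_mem (F.factor_mem _ (by omega) hjn)) w
    rw [hw]
    exact zero_comp

theorem phase_one_le_of_mem {φ : ℝ} (hE : E ∈ S.P φ) : F.phase 1 ≤ φ := by
  by_contra! hlt
  obtain ⟨u, hu⟩ := F.exists_hom_filtObj_one_ne_zero S F.one_le_n le_rfl
  exact hu (S.hom_zero _ φ hlt _ _ (F.filtObj_one_mem S) (by rwa [F.filtObj_n]) u)

end HNFiltration

theorem hn_of_semistable_general (S : Slicing D) (E : D)
    (φ₁ : ℝ) (hsemi : E ∈ S.P φ₁)
    (F : HNFiltration S.P E) :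
    F.n = 1 ∧ Nonempty (F.factor 1 ≅ E) := by
  have hn : F.n = 1 := by
    by_contra hn
    have := F.phase_lt_phase le_rfl (by have := F.one_le_n; omega) le_rfl
    linarith [F.phase_one_le_of_mem S hsemi, F.le_phase_last_of_mem S hsemi]
  obtain ⟨e⟩ := F.nonempty_filtObj_one_iso_factor_one
  exact ⟨hn, ⟨e.symm ≪≫ eqToIso (hn ▸ F.filtObj_n)⟩⟩

/-- Lemma B.7: if a nonzero object `E` of a triangulated category with a slicing
is semistable, i.e. `E ∈ P φ₁` for some real number `φ₁`, then any HN filtration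
of `E` has length one and its single semistable factor is isomorphic to `E`. -/
theorem hn_of_semistable [IsTriangulated D] (S : Slicing D) (E : D)
    (hE : ¬ IsZero E) (φ₁ : ℝ) (hsemi : E ∈ S.P φ₁)
    (F : HNFiltration S.P E) :
    F.n = 1 ∧ Nonempty (F.factor 1 ≅ E) :=
  hn_of_semistable_general S E φ₁ hsemi F
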